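/- arXiv:1603.07520 — 2 statements merged into one kernel-verified Lean document; each statement's English description precedes it below -/
import Mathlib

section
/- Let f(x,y) = λ₀+λ₁x+λ₂y+λ₃xy+λ₄x²+λ₅y²+λ₆x²y+λ₇xy²+λ₈x³+λ₉y³ and g(x,y) = γ₀+γ₁x+γ₂y+γ₃xy+γ₄x²+γ₅y²+γ₆x²y+γ₇xy²+γ₈x³+γ₉y³ be real cubic polynomials. Then for every h ∈ (−1/4, 0), the first Melnikov function of the interior period annulus, M₁(h) = ∮_{γ(h)} (g dx − f dy) = ∬_{{(x,y) : x>0, H(x,y)<h}} (∂f/∂x + ∂g/∂y) dx dy, satisfies M₁(h) = (c₀ + c₁h)·I₀(h) + (2λ₄ + γ₃)·I₁(h) + c₂·I₂(h), where c₀ = λ₁ + γ₂, c₁ = (4/7)(λ₇ + 3γ₉), and c₂ = γ₆ + 3λ₈ + λ₇/7 + 3γ₉/7. -/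
open MeasureTheory

/-- The Duffing Hamiltonian `H(x,y) = y²/2 − x²/2 + x⁴/4`. -/
noncomputable def Hduff (x y : ℝ) : ℝ := y^2/2 - x^2/2 + x^4/4

/-- Left endpoint `x₁(h) = √(1 − √(1+4h))` of the interior oval. -/
noncomputable def x1 (h : ℝ) : ℝ := Real.sqrt (1 - Real.sqrt (1 + 4*h))

/-- Right endpoint `x₂(h) = √(1 + √(1+4h))` of the interior oval. -/
noncomputable def x2 (h : ℝ) : ℝ := Real.sqrt (1 + Real.sqrt (1 + 4*h))

/-- The interior Abelian integrals `I_i(h) = 2∫_{x₁(h)}^{x₂(h)} xⁱ √(2h + x² − x⁴/2) dx`. -/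
noncomputable def Iint (i : ℕ) (h : ℝ) : ℝ :=
  2 * ∫ x in x1 h..x2 h, x ^ i * Real.sqrt (2*h + x^2 - x^4/2)


lemma my_fubini_region (f g : ℝ → ℝ) (hf : Measurable f) (hg : Measurable g)
    {s : Set ℝ} (hs : MeasurableSet s) (F : ℝ × ℝ → ℝ)
    (hFi : IntegrableOn F (regionBetween f g s)) :
    ∫ p in regionBetween f g s, F p = ∫ x in s, ∫ y in Set.Ioo (f x) (g x), F (x, y) := by
  have hR : MeasurableSet (regionBetween f g s) := measurableSet_regionBetween hf hg hs
  rw [← MeasureTheory.integral_indicator hR]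
  have hInt : Integrable ((regionBetween f g s).indicator F) :=
    (integrable_indicator_iff hR).2 hFi
  rw [MeasureTheory.Measure.volume_eq_prod] at hInt ⊢
  rw [MeasureTheory.integral_prod _ hInt]
  rw [← MeasureTheory.integral_indicator hs]
  congr 1
  funext x
  by_cases hx : x ∈ s
  · rw [Set.indicator_of_mem hx, ← MeasureTheory.integral_indicator measurableSet_Ioo]
    congr 1
    funext y
    by_cases hy : y ∈ Set.Ioo (f x) (g x)
    · have hmem : (x, y) ∈ regionBetween f g s := ⟨hx, hy⟩
      rw [Set.indicator_of_mem hy, Set.indicator_of_mem hmem]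
    · have hmem : (x, y) ∉ regionBetween f g s := fun hc => hy hc.2
      rw [Set.indicator_of_notMem hy, Set.indicator_of_notMem hmem]
  · rw [Set.indicator_of_notMem hx]
    have hz : ∀ y : ℝ, (regionBetween f g s).indicator F (x, y) = 0 := fun y =>
      Set.indicator_of_notMem (fun hc : (x, y) ∈ regionBetween f g s => hx hc.1) F
    simp [hz]

lemma my_inner_integral (A B C c : ℝ) (hc : 0 ≤ c) :
    ∫ y in Set.Ioo (-c) c, (A + B * y + C * y ^ 2) = 2 * A * c + 2 / 3 * C * c ^ 3 := by
  have h1 : ∫ y in Set.Ioo (-c) c, (A + B * y + C * y ^ 2)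
      = ∫ y in (-c)..c, (A + B * y + C * y ^ 2) := by
    rw [intervalIntegral.integral_of_le (by linarith), MeasureTheory.integral_Ioc_eq_integral_Ioo]
  have hd : ∀ y : ℝ, HasDerivAt (fun y => A * y + B * (y ^ 2 / 2) + C * (y ^ 3 / 3))
      (A + B * y + C * y ^ 2) y := by
    intro y
    have h1 := (hasDerivAt_id y).const_mul A
    have h2 := ((hasDerivAt_pow 2 y).div_const 2).const_mul B
    have h3 := ((hasDerivAt_pow 3 y).div_const 3).const_mul C
    refine ((h1.add h2).add h3).congr_deriv ?_
    push_cast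
    ring
  rw [h1, intervalIntegral.integral_eq_sub_of_hasDerivAt (fun y _ => hd y)
    ((by continuity : Continuous fun y : ℝ => A + B * y + C * y ^ 2).intervalIntegrable _ _)]
  ring

lemma my_combo (a b : ℝ) (w : ℝ → ℝ) (hw : Continuous w) (c0 c1 c2 c3 : ℝ) :
    ∫ x in a..b, (c0 * w x + c1 * (x * w x) + c2 * (x ^ 2 * w x) + c3 * (w x) ^ 3)
      = c0 * (∫ x in a..b, w x) + c1 * (∫ x in a..b, x * w x)
        + c2 * (∫ x in a..b, x ^ 2 * w x) + c3 * (∫ x in a..b, (w x) ^ 3) := by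
  have i0 : IntervalIntegrable w volume a b := hw.intervalIntegrable _ _
  have i1 : IntervalIntegrable (fun x => x * w x) volume a b :=
    (continuous_id.mul hw).intervalIntegrable _ _
  have i2 : IntervalIntegrable (fun x => x ^ 2 * w x) volume a b :=
    ((continuous_pow 2).mul hw).intervalIntegrable _ _
  have i3 : IntervalIntegrable (fun x => (w x) ^ 3) volume a b :=
    (hw.pow 3).intervalIntegrable _ _
  rw [intervalIntegral.integral_add (((i0.const_mul c0).add (i1.const_mul c1)).add
      (i2.const_mul c2)) (i3.const_mul c3),
    intervalIntegral.integral_add ((i0.const_mul c0).add (i1.const_mul c1)) (i2.const_mul c2),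
    intervalIntegral.integral_add (i0.const_mul c0) (i1.const_mul c1),
    intervalIntegral.integral_const_mul, intervalIntegral.integral_const_mul,
    intervalIntegral.integral_const_mul, intervalIntegral.integral_const_mul]

lemma my_ibp (a b c : ℝ) (hab : a ≤ b)
    (hza : 2 * c + a ^ 2 - a ^ 4 / 2 = 0) (hzb : 2 * c + b ^ 2 - b ^ 4 / 2 = 0)
    (hpos : ∀ x ∈ Set.Ioo a b, 0 < 2 * c + x ^ 2 - x ^ 4 / 2)
    (hnn : ∀ x ∈ Set.Icc a b, 0 ≤ 2 * c + x ^ 2 - x ^ 4 / 2) :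
    7 * (∫ x in a..b, (Real.sqrt (2 * c + x ^ 2 - x ^ 4 / 2)) ^ 3)
      = 12 * c * (∫ x in a..b, Real.sqrt (2 * c + x ^ 2 - x ^ 4 / 2))
        + 3 * (∫ x in a..b, x ^ 2 * Real.sqrt (2 * c + x ^ 2 - x ^ 4 / 2)) := by
  set u : ℝ → ℝ := fun x => Real.sqrt (2 * c + x ^ 2 - x ^ 4 / 2) with hu_def
  have hucont : Continuous u := Real.continuous_sqrt.comp (by continuity)
  set φ : ℝ → ℝ := fun x => x * (u x) ^ 3 with hφ_def
  set ψ : ℝ → ℝ := fun x => (u x) ^ 3 + 3 * x ^ 2 * (1 - x ^ 2) * u x with hψ_def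
  have hψcont : Continuous ψ := by
    apply ((hucont.pow 3).add _)
    exact (by continuity : Continuous fun x : ℝ => 3 * x ^ 2 * (1 - x ^ 2)).mul hucont
  have hderiv : ∀ x ∈ Set.Ioo a b, HasDerivAt φ (ψ x) x := by
    intro x hx
    have hP : 0 < 2 * c + x ^ 2 - x ^ 4 / 2 := hpos x hx
    have hPd : HasDerivAt (fun x : ℝ => 2 * c + x ^ 2 - x ^ 4 / 2) (2 * x - 2 * x ^ 3) x := by
      have h2 := hasDerivAt_pow 2 x
      have h4 := (hasDerivAt_pow 4 x).div_const 2
      refine ((h2.const_add (2 * c)).sub h4).congr_deriv ?_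
      push_cast; ring
    have hu : HasDerivAt u ((2 * x - 2 * x ^ 3) / (2 * u x)) x := hPd.sqrt (ne_of_gt hP)
    have hune : u x ≠ 0 := ne_of_gt (Real.sqrt_pos.2 hP)
    have hu3 := hu.pow 3
    have hmul := (hasDerivAt_id x).mul hu3
    refine hmul.congr_deriv ?_
    simp only [Pi.pow_apply, id]
    field_simp
    ring
  have hφcont : ContinuousOn φ (Set.Icc a b) :=
    (continuous_id.mul (hucont.pow 3)).continuousOn
  have hFTC := intervalIntegral.integral_eq_sub_of_hasDerivAt_of_le hab hφcont hderiv
    (hψcont.intervalIntegrable _ _)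
  have hua : u a = 0 := by rw [hu_def]; simp only []; rw [hza, Real.sqrt_zero]
  have hub : u b = 0 := by rw [hu_def]; simp only []; rw [hzb, Real.sqrt_zero]
  have hφ0 : ∫ x in a..b, ψ x = 0 := by
    rw [hFTC, hφ_def]; simp [hua, hub]
  have hcong : ∫ x in a..b, ψ x
      = ∫ x in a..b, ((-12 * c) * u x + 0 * (x * u x) + (-3) * (x ^ 2 * u x) + 7 * (u x) ^ 3) := by
    apply intervalIntegral.integral_congr
    intro x hx
    rw [Set.uIcc_of_le hab] at hx
    have hsq : u x ^ 2 = 2 * c + x ^ 2 - x ^ 4 / 2 := Real.sq_sqrt (hnn x hx)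
    simp only [hψ_def]
    linear_combination (-6 * u x) * hsq
  have hcombo := my_combo a b u hucont (-12 * c) 0 (-3) 7
  rw [hcong, hcombo] at hφ0
  linarith

set_option maxHeartbeats 2000000 in
theorem melnikov1_interior
    (l0 l1 l2 l3 l4 l5 l6 l7 l8 l9 g0 g1 g2 g3 g4 g5 g6 g7 g8 g9 : ℝ)
    (h : ℝ) (hh : h ∈ Set.Ioo (-(1:ℝ)/4) 0) :
    (∫ p in {p : ℝ × ℝ | 0 < p.1 ∧ Hduff p.1 p.2 < h},
      ((l1 + l3 * p.2 + 2*l4*p.1 + 2*l6*p.1*p.2 + l7*p.2^2 + 3*l8*p.1^2)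
        + (g2 + g3*p.1 + 2*g5*p.2 + g6*p.1^2 + 2*g7*p.1*p.2 + 3*g9*p.2^2)))
      = ((l1 + g2) + (4/7)*(l7 + 3*g9) * h) * Iint 0 h
        + (2*l4 + g3) * Iint 1 h
        + (g6 + 3*l8 + l7/7 + 3*g9/7) * Iint 2 h := by
  obtain ⟨hh1, hh2⟩ := hh
  have hs0 : (0:ℝ) < 1 + 4 * h := by linarith
  set s := Real.sqrt (1 + 4 * h) with hs_def
  have hs_pos : 0 < s := Real.sqrt_pos.2 hs0
  have hs_sq : s ^ 2 = 1 + 4 * h := Real.sq_sqrt hs0.le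
  have hs_lt1 : s < 1 := by nlinarith [hs_sq, hs_pos]
  have ha_sq : (x1 h) ^ 2 = 1 - s := by
    rw [x1, ← hs_def]; exact Real.sq_sqrt (by linarith)
  have hb_sq : (x2 h) ^ 2 = 1 + s := by
    rw [x2, ← hs_def]; exact Real.sq_sqrt (by linarith)
  have ha_pos : 0 < x1 h := by
    rw [x1, ← hs_def]; exact Real.sqrt_pos.2 (by linarith)
  have hb_pos : 0 < x2 h := by
    rw [x2, ← hs_def]; exact Real.sqrt_pos.2 (by linarith)
  have hab : x1 h < x2 h := by
    rw [x1, x2, ← hs_def]; exact Real.sqrt_lt_sqrt (by linarith) (by linarith)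
  have hPfact : ∀ x : ℝ, 2*h + x^2 - x^4/2 = (x^2 - (1 - s)) * ((1 + s) - x^2) / 2 := by
    intro x; linear_combination (-(1:ℝ)/2) * hs_sq
  have hnn : ∀ x ∈ Set.Icc (x1 h) (x2 h), 0 ≤ 2*h + x^2 - x^4/2 := by
    rintro x ⟨hx1, hx2⟩
    have h1 : 1 - s ≤ x^2 := by nlinarith [ha_sq, ha_pos]
    have h2 : x^2 ≤ 1 + s := by nlinarith [hb_sq, ha_pos]
    rw [hPfact x]
    have := mul_nonneg (by linarith : (0:ℝ) ≤ x^2 - (1 - s)) (by linarith : (0:ℝ) ≤ (1 + s) - x^2)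
    linarith
  have hpos : ∀ x ∈ Set.Ioo (x1 h) (x2 h), 0 < 2*h + x^2 - x^4/2 := by
    rintro x ⟨hx1, hx2⟩
    have h1 : 1 - s < x^2 := by nlinarith [ha_sq, ha_pos]
    have h2 : x^2 < 1 + s := by nlinarith [hb_sq, ha_pos]
    rw [hPfact x]
    have := mul_pos (by linarith : (0:ℝ) < x^2 - (1 - s)) (by linarith : (0:ℝ) < (1 + s) - x^2)
    linarith
  have hza : 2*h + (x1 h)^2 - (x1 h)^4/2 = 0 := by
    have h4 : (x1 h)^4 = (1 - s)^2 := by rw [show (x1 h)^4 = ((x1 h)^2)^2 by ring, ha_sq]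
    rw [ha_sq, h4]; linear_combination (-(1:ℝ)/2) * hs_sq
  have hzb : 2*h + (x2 h)^2 - (x2 h)^4/2 = 0 := by
    have h4 : (x2 h)^4 = (1 + s)^2 := by rw [show (x2 h)^4 = ((x2 h)^2)^2 by ring, hb_sq]
    rw [hb_sq, h4]; linear_combination (-(1:ℝ)/2) * hs_sq
  have hucont : Continuous (fun x : ℝ => Real.sqrt (2*h + x^2 - x^4/2)) :=
    Real.continuous_sqrt.comp (by continuity)
  -- set identification
  have hset : {p : ℝ × ℝ | 0 < p.1 ∧ Hduff p.1 p.2 < h}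
      = regionBetween (fun x => -Real.sqrt (2*h + x^2 - x^4/2))
          (fun x => Real.sqrt (2*h + x^2 - x^4/2)) (Set.Ioo (x1 h) (x2 h)) := by
    ext ⟨x, y⟩
    simp only [Set.mem_setOf_eq, regionBetween, Set.mem_Ioo, Hduff]
    constructor
    · rintro ⟨hx0, hH⟩
      have hy2 : y^2 < 2*h + x^2 - x^4/2 := by linarith
      have hPx : 0 < 2*h + x^2 - x^4/2 := (sq_nonneg y).trans_lt hy2
      have hprod : 0 < (x^2 - (1 - s)) * ((1 + s) - x^2) := by
        rw [hPfact x] at hPx; linarith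
      have hx2lt : x^2 < 1 + s := by nlinarith [hprod, hs_pos, sq_nonneg (x^2 - 1 + s), sq_nonneg (x^2 - 1 - s)]
      have hx2gt : 1 - s < x^2 := by nlinarith [hprod, hs_pos, sq_nonneg (x^2 - 1 + s), sq_nonneg (x^2 - 1 - s)]
      have hxa : x1 h < x := by nlinarith [ha_sq, ha_pos, hx0, hx2gt]
      have hxb : x < x2 h := by nlinarith [hb_sq, hb_pos, hx0, hx2lt]
      have habs : |y| < Real.sqrt (2*h + x^2 - x^4/2) :=
        (Real.lt_sqrt (abs_nonneg y)).2 (by rwa [sq_abs])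
      have hyy := abs_lt.1 habs
      exact ⟨⟨hxa, hxb⟩, hyy.1, hyy.2⟩
    · rintro ⟨⟨hxa, hxb⟩, hy1, hy2⟩
      have hx0 : 0 < x := ha_pos.trans hxa
      have husq : Real.sqrt (2*h + x^2 - x^4/2) ^ 2 = 2*h + x^2 - x^4/2 :=
        Real.sq_sqrt (hnn x ⟨hxa.le, hxb.le⟩)
      have hy2' : y^2 < Real.sqrt (2*h + x^2 - x^4/2) ^ 2 := sq_lt_sq' hy1 hy2
      exact ⟨hx0, by nlinarith⟩
  -- integrability
  have hFcont : Continuous (fun p : ℝ × ℝ =>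
      ((l1 + l3 * p.2 + 2*l4*p.1 + 2*l6*p.1*p.2 + l7*p.2^2 + 3*l8*p.1^2)
        + (g2 + g3*p.1 + 2*g5*p.2 + g6*p.1^2 + 2*g7*p.1*p.2 + 3*g9*p.2^2))) := by
    continuity
  have hsub : {p : ℝ × ℝ | 0 < p.1 ∧ Hduff p.1 p.2 < h}
      ⊆ Set.Icc ((0:ℝ), (-2:ℝ)) ((2:ℝ), (2:ℝ)) := by
    rintro ⟨x, y⟩ ⟨hx0, hH⟩
    simp only [Hduff] at hH
    have hy2 : y^2 < 2*h + x^2 - x^4/2 := by linarith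
    have hx2 : x^2 < 2 := by nlinarith [sq_nonneg y, mul_pos hx0 hx0]
    have hy4 : y^2 < 1/2 := by nlinarith [sq_nonneg (x^2 - 1)]
    simp only [Set.mem_Icc, Prod.mk_le_mk]
    refine ⟨⟨hx0.le, by nlinarith [sq_nonneg (y + 2)]⟩,
      ⟨by nlinarith [sq_nonneg (x - 2)], by nlinarith [sq_nonneg (y - 2)]⟩⟩
  have hFi : IntegrableOn (fun p : ℝ × ℝ =>
      ((l1 + l3 * p.2 + 2*l4*p.1 + 2*l6*p.1*p.2 + l7*p.2^2 + 3*l8*p.1^2)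
        + (g2 + g3*p.1 + 2*g5*p.2 + g6*p.1^2 + 2*g7*p.1*p.2 + 3*g9*p.2^2)))
      (regionBetween (fun x => -Real.sqrt (2*h + x^2 - x^4/2))
        (fun x => Real.sqrt (2*h + x^2 - x^4/2)) (Set.Ioo (x1 h) (x2 h))) := by
    apply (hFcont.continuousOn.integrableOn_compact isCompact_Icc).mono_set
    rw [← hset]; exact hsub
  -- inner integral
  have hinner : ∀ x : ℝ,
      (∫ y in Set.Ioo (-Real.sqrt (2*h + x^2 - x^4/2)) (Real.sqrt (2*h + x^2 - x^4/2)),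
        ((l1 + l3 * y + 2*l4*x + 2*l6*x*y + l7*y^2 + 3*l8*x^2)
          + (g2 + g3*x + 2*g5*y + g6*x^2 + 2*g7*x*y + 3*g9*y^2)))
      = 2*((l1+g2) + (2*l4+g3)*x + (g6+3*l8)*x^2) * Real.sqrt (2*h + x^2 - x^4/2)
        + 2/3*(l7+3*g9)*(Real.sqrt (2*h + x^2 - x^4/2))^3 := by
    intro x
    have hfun : (fun y : ℝ =>
        ((l1 + l3 * y + 2*l4*x + 2*l6*x*y + l7*y^2 + 3*l8*x^2)
          + (g2 + g3*x + 2*g5*y + g6*x^2 + 2*g7*x*y + 3*g9*y^2)))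
        = fun y : ℝ => ((l1+g2) + (2*l4+g3)*x + (g6+3*l8)*x^2)
            + (l3 + 2*l6*x + 2*g5 + 2*g7*x) * y + (l7+3*g9) * y^2 :=
      funext fun y => by ring
    rw [hfun, my_inner_integral _ _ _ _ (Real.sqrt_nonneg _)]
  -- key Abelian-integral identity
  have hK := my_ibp (x1 h) (x2 h) h hab.le hza hzb hpos hnn
  -- main computation
  rw [hset]
  refine (my_fubini_region _ _ (hucont.neg).measurable hucont.measurable measurableSet_Ioo _
    hFi).trans ?_
  have heq1 : (∫ x in Set.Ioo (x1 h) (x2 h),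
      (2*((l1+g2) + (2*l4+g3)*x + (g6+3*l8)*x^2) * Real.sqrt (2*h + x^2 - x^4/2)
        + 2/3*(l7+3*g9)*(Real.sqrt (2*h + x^2 - x^4/2))^3))
      = ((l1 + g2) + (4/7)*(l7 + 3*g9) * h) * Iint 0 h
        + (2*l4 + g3) * Iint 1 h
        + (g6 + 3*l8 + l7/7 + 3*g9/7) * Iint 2 h := by
    rw [← MeasureTheory.integral_Ioc_eq_integral_Ioo, ← intervalIntegral.integral_of_le hab.le]
    have hcombo := my_combo (x1 h) (x2 h) (fun x => Real.sqrt (2*h + x^2 - x^4/2)) hucont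
      (2*(l1+g2)) (2*(2*l4+g3)) (2*(g6+3*l8)) (2/3*(l7+3*g9))
    rw [intervalIntegral.integral_congr (g := fun x =>
      ((2*(l1+g2)) * Real.sqrt (2*h + x^2 - x^4/2)
        + (2*(2*l4+g3)) * (x * Real.sqrt (2*h + x^2 - x^4/2))
        + (2*(g6+3*l8)) * (x^2 * Real.sqrt (2*h + x^2 - x^4/2))
        + (2/3*(l7+3*g9)) * (Real.sqrt (2*h + x^2 - x^4/2))^3)) (fun x _ => by ring)]
    rw [hcombo]
    simp only [Iint, pow_zero, one_mul, pow_one]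
    linear_combination (2*(l7+3*g9)/21) * hK
  rw [← heq1]
  exact MeasureTheory.integral_congr_ae (Filter.Eventually.of_forall fun x => hinner x)
end

section
/- Let f(x,y) = λ₀+λ₁x+λ₂y+λ₃xy+λ₄x²+λ₅y²+λ₆x²y+λ₇xy²+λ₈x³+λ₉y³ and g(x,y) = γ₀+γ₁x+γ₂y+γ₃xy+γ₄x²+γ₅y²+γ₆x²y+γ₇xy²+γ₈x³+γ₉y³ be real cubic polynomials. Then for every h > 0, the first Melnikov function of the exterior period annulus, M₁(h) = ∮_{γ(h)} (g dx − f dy) = ∬_{{(x,y) : H(x,y)<h}} (∂f/∂x + ∂g/∂y) dx dy, satisfies M₁(h) = (c₀ + c₁h)·I₀(h) + c₂·I₂(h), where c₀ = λ₁ + γ₂, c₁ = (4/7)(λ₇ + 3γ₉), and c₂ = γ₆ + 3λ₈ + λ₇/7 + 3γ₉/7. -/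
open MeasureTheory

/-- Endpoint `a(h) = √(1 + √(1+4h))` of the exterior oval. -/
noncomputable def aext (h : ℝ) : ℝ := Real.sqrt (1 + Real.sqrt (1 + 4*h))

/-- The exterior Abelian integrals `I_i(h) = 2∫_{−a(h)}^{a(h)} xⁱ √(2h + x² − x⁴/2) dx`. -/
noncomputable def Iext (i : ℕ) (h : ℝ) : ℝ :=
  2 * ∫ x in (-aext h)..aext h, x ^ i * Real.sqrt (2*h + x^2 - x^4/2)

/-! ### Auxiliary definitions and lemmas -/

/-- The radicand `R(x) = 2h + x² − x⁴/2`. -/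
noncomputable def Rd (h x : ℝ) : ℝ := 2*h + x^2 - x^4/2

lemma sqrt14 (h : ℝ) (hh : 0 < h) : 1 < Real.sqrt (1 + 4*h) := by
  have : (1:ℝ) = Real.sqrt 1 := (Real.sqrt_one).symm
  rw [this]
  exact Real.sqrt_lt_sqrt (by norm_num) (by linarith)

lemma aext_sq (h : ℝ) : aext h ^ 2 = 1 + Real.sqrt (1 + 4*h) := by
  have h0 : (0:ℝ) ≤ 1 + Real.sqrt (1 + 4*h) := by positivity
  exact Real.sq_sqrt h0

lemma aext_pos (h : ℝ) : 0 < aext h := by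
  apply Real.sqrt_pos.mpr
  have := Real.sqrt_nonneg (1 + 4*h); linarith

lemma Rd_fac (h x : ℝ) (hh : 0 < h) :
    Rd h x = (aext h ^ 2 - x^2) * (x^2 + (Real.sqrt (1+4*h) - 1)) / 2 := by
  have hs : Real.sqrt (1+4*h) ^ 2 = 1 + 4*h := Real.sq_sqrt (by linarith)
  rw [aext_sq]
  unfold Rd
  nlinarith [hs]

lemma Rd_pos (h x : ℝ) (hh : 0 < h) (hx : x^2 < aext h ^ 2) : 0 < Rd h x := by
  rw [Rd_fac h x hh]
  have h1 := sqrt14 h hh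
  have : 0 ≤ x^2 := sq_nonneg x
  nlinarith

lemma Rd_nonpos (h x : ℝ) (hh : 0 < h) (hx : aext h ^ 2 ≤ x^2) : Rd h x ≤ 0 := by
  rw [Rd_fac h x hh]
  have h1 := sqrt14 h hh
  have : 0 ≤ x^2 := sq_nonneg x
  nlinarith

lemma Rd_cont (h : ℝ) : Continuous fun x => Rd h x := by unfold Rd; fun_prop

lemma sqRd_cont (h : ℝ) : Continuous fun x => Real.sqrt (Rd h x) :=
  Real.continuous_sqrt.comp (Rd_cont h)

lemma S_eq (h : ℝ) :
    {p : ℝ × ℝ | Hduff p.1 p.2 < h} = {p : ℝ × ℝ | p.2^2 < Rd h p.1} := by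
  ext p
  simp only [Set.mem_setOf_eq, Hduff, Rd]
  constructor <;> intro H <;> linarith

lemma slice_eq (h x : ℝ) (hh : 0 < h) :
    {y : ℝ | y^2 < Rd h x} = Set.Ioo (-(Real.sqrt (Rd h x))) (Real.sqrt (Rd h x)) := by
  ext y
  simp only [Set.mem_setOf_eq, Set.mem_Ioo]
  rcases le_or_gt (Rd h x) 0 with hR | hR
  · have hb : Real.sqrt (Rd h x) = 0 := Real.sqrt_eq_zero_of_nonpos hR
    rw [hb]
    constructor
    · intro H; nlinarith [sq_nonneg y]
    · intro ⟨H1, H2⟩; linarith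
  · have hb : Real.sqrt (Rd h x) ^ 2 = Rd h x := Real.sq_sqrt hR.le
    have hb0 : 0 < Real.sqrt (Rd h x) := Real.sqrt_pos.mpr hR
    constructor
    · intro H
      constructor
      · nlinarith [sq_nonneg (y + Real.sqrt (Rd h x))]
      · nlinarith [sq_nonneg (y - Real.sqrt (Rd h x))]
    · intro ⟨H1, H2⟩; nlinarith

lemma S_subset (h : ℝ) (hh : 0 < h) :
    {p : ℝ × ℝ | Hduff p.1 p.2 < h} ⊆
      Set.Icc (-aext h) (aext h) ×ˢ
        Set.Icc (-(Real.sqrt (2*h + aext h ^ 2))) (Real.sqrt (2*h + aext h ^ 2)) := by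
  rw [S_eq]
  rintro ⟨x, y⟩ hp
  simp only [Set.mem_setOf_eq] at hp
  have hRpos : 0 < Rd h x := lt_of_le_of_lt (sq_nonneg y) hp
  have hx2 : x^2 < aext h ^ 2 := by
    by_contra H
    exact absurd (Rd_nonpos h x hh (not_lt.mp H)) (not_le.mpr hRpos)
  have ha := aext_pos h
  have hx : -aext h ≤ x ∧ x ≤ aext h := by
    constructor <;> nlinarith
  have hy2 : y^2 < 2*h + aext h ^ 2 := by
    have : Rd h x ≤ 2*h + x^2 := by unfold Rd; nlinarith [sq_nonneg (x^2)]
    nlinarith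
  have hc : Real.sqrt (2*h + aext h ^ 2) ^ 2 = 2*h + aext h ^ 2 :=
    Real.sq_sqrt (by positivity)
  have hc0 : 0 ≤ Real.sqrt (2*h + aext h ^ 2) := Real.sqrt_nonneg _
  constructor
  · exact ⟨hx.1, hx.2⟩
  · constructor <;> nlinarith

lemma S_open (h : ℝ) : IsOpen {p : ℝ × ℝ | Hduff p.1 p.2 < h} := by
  have : Continuous fun p : ℝ × ℝ => Hduff p.1 p.2 := by
    unfold Hduff; fun_prop
  exact isOpen_lt this continuous_const

lemma fubini_S (h : ℝ) (hh : 0 < h) (f : ℝ → ℝ → ℝ)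
    (hf : Continuous fun p : ℝ × ℝ => f p.1 p.2) :
    (∫ p in {p : ℝ × ℝ | Hduff p.1 p.2 < h}, f p.1 p.2) =
      ∫ x, ∫ y in Set.Ioo (-(Real.sqrt (Rd h x))) (Real.sqrt (Rd h x)), f x y := by
  have hmeas : MeasurableSet {p : ℝ × ℝ | Hduff p.1 p.2 < h} := (S_open h).measurableSet
  have hint : IntegrableOn (fun p : ℝ × ℝ => f p.1 p.2)
      {p : ℝ × ℝ | Hduff p.1 p.2 < h} := by
    apply IntegrableOn.mono_set _ (S_subset h hh)
    exact hf.continuousOn.integrableOn_compact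
      ((isCompact_Icc).prod (isCompact_Icc))
  rw [← MeasureTheory.integral_indicator hmeas]
  have hind : Integrable ({p : ℝ × ℝ | Hduff p.1 p.2 < h}.indicator
      fun p : ℝ × ℝ => f p.1 p.2) := (integrable_indicator_iff hmeas).mpr hint
  rw [MeasureTheory.Measure.volume_eq_prod ℝ ℝ] at hind ⊢
  rw [MeasureTheory.integral_prod _ hind]
  congr 1
  ext x
  have : (fun y => {p : ℝ × ℝ | Hduff p.1 p.2 < h}.indicator
      (fun p : ℝ × ℝ => f p.1 p.2) (x, y))
      = (Set.Ioo (-(Real.sqrt (Rd h x))) (Real.sqrt (Rd h x))).indicator (f x) := by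
    ext y
    rw [S_eq h]
    simp only [Set.indicator_apply, Set.mem_setOf_eq, ← slice_eq h x hh]
    try rfl
  rw [this]
  try exact MeasureTheory.integral_indicator measurableSet_Ioo

lemma inner_int (A B C b : ℝ) (hb : 0 ≤ b) :
    (∫ y in Set.Ioo (-b) b, (A + B*y + C*y^2)) = 2*b*A + (2/3)*b^3*C := by
  rw [← MeasureTheory.integral_Ioc_eq_integral_Ioo,
    ← intervalIntegral.integral_of_le (by linarith : -b ≤ b)]
  have i1 : IntervalIntegrable (fun _ : ℝ => A) volume (-b) b :=
    intervalIntegrable_const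
  have i2 : IntervalIntegrable (fun y : ℝ => B*y) volume (-b) b :=
    (continuous_const.mul continuous_id).intervalIntegrable _ _
  have i3 : IntervalIntegrable (fun y : ℝ => C*y^2) volume (-b) b :=
    (continuous_const.mul (continuous_pow 2)).intervalIntegrable _ _
  rw [intervalIntegral.integral_add (i1.add i2) i3, intervalIntegral.integral_add i1 i2,
    intervalIntegral.integral_const, intervalIntegral.integral_const_mul,
    intervalIntegral.integral_const_mul, integral_id, integral_pow]
  push_cast
  simp only [smul_eq_mul]
  ring

lemma odd_int (h : ℝ) :
    (∫ x in (-aext h)..(aext h), x * Real.sqrt (Rd h x)) = 0 := by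
  have hRe : ∀ x : ℝ, Rd h (-x) = Rd h x := by intro x; unfold Rd; ring
  have key := intervalIntegral.integral_comp_neg (a := -aext h) (b := aext h)
    (fun x => x * Real.sqrt (Rd h x))
  simp only [neg_neg] at key
  have heq : ∀ x : ℝ, (-x) * Real.sqrt (Rd h (-x)) = -(x * Real.sqrt (Rd h x)) := by
    intro x; rw [hRe]; ring
  simp only [heq, intervalIntegral.integral_neg] at key
  linarith

lemma Rd_at_a (h : ℝ) (hh : 0 < h) : Rd h (aext h) = 0 := by
  have h0 : (0:ℝ) ≤ 1 + Real.sqrt (1 + 4*h) := by positivity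
  have ha : aext h ^ 2 = 1 + Real.sqrt (1 + 4*h) := Real.sq_sqrt h0
  have hs : Real.sqrt (1+4*h) ^ 2 = 1 + 4*h := Real.sq_sqrt (by linarith)
  unfold Rd
  nlinarith [hs, ha]

lemma Rd_at_neg_a (h : ℝ) (hh : 0 < h) : Rd h (-aext h) = 0 := by
  have := Rd_at_a h hh
  unfold Rd at *
  nlinarith [this]

lemma pf_deriv (h x : ℝ) (hh : 0 < h) (hx : x ∈ Set.Ioo (-aext h) (aext h)) :
    HasDerivAt (fun t => t * Real.sqrt (Rd h t) ^ 3)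
      (7 * (Real.sqrt (Rd h x) ^ 3) - 3 * (x^2 * Real.sqrt (Rd h x))
        - (12 * h) * Real.sqrt (Rd h x)) x := by
  obtain ⟨hx1, hx2⟩ := hx
  have hxa : x^2 < aext h ^ 2 := by nlinarith [aext_pos h]
  have hR : 0 < Rd h x := Rd_pos h x hh hxa
  set s := Real.sqrt (Rd h x) with hs
  have hs0 : 0 < s := Real.sqrt_pos.mpr hR
  have hs2 : s ^ 2 = Rd h x := Real.sq_sqrt hR.le
  have hs2' : s ^ 2 = 2*h + x^2 - x^4/2 := by rw [hs2]; rfl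
  have hpoly : HasDerivAt (fun t : ℝ => Rd h t) (2*x - 2*x^3) x := by
    have h1 := ((hasDerivAt_pow 2 x).const_add (2*h)).sub ((hasDerivAt_pow 4 x).div_const 2)
    have : (fun t : ℝ => 2*h + t^2 - t^4/2) = fun t => Rd h t := by
      funext t; unfold Rd; ring
    change HasDerivAt (fun t : ℝ => 2*h + t^2 - t^4/2) _ x at h1
    rw [this] at h1
    convert h1 using 1
    push_cast; ring
  have hsqrt : HasDerivAt (fun t => Real.sqrt (Rd h t))
      ((2*x - 2*x^3) / (2 * s)) x := hpoly.sqrt hR.ne'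
  have hcube := hsqrt.pow 3
  have hG := (hasDerivAt_id x).mul hcube
  convert hG using 1
  case e'_4 => rfl
  case e'_5 => rfl
  case e'_8 => rfl
  simp only [Pi.pow_apply, id_eq]
  rw [← hs]
  push_cast
  field_simp
  nlinarith [hs2', sq_nonneg s, mul_pos hs0 hs0]

lemma picard_fuchs (h : ℝ) (hh : 0 < h) :
    7 * (∫ x in (-aext h)..(aext h), Real.sqrt (Rd h x) ^ 3)
      = 3 * (∫ x in (-aext h)..(aext h), x^2 * Real.sqrt (Rd h x))
        + 12 * h * (∫ x in (-aext h)..(aext h), Real.sqrt (Rd h x)) := by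
  have ha := aext_pos h
  have hle : -aext h ≤ aext h := by linarith
  have hcont : ContinuousOn (fun t => t * Real.sqrt (Rd h t) ^ 3)
      (Set.Icc (-aext h) (aext h)) :=
    (continuous_id.mul ((Real.continuous_sqrt.comp (Rd_cont h)).pow 3)).continuousOn
  have hder : ∀ x ∈ Set.Ioo (-aext h) (aext h),
      HasDerivWithinAt (fun t => t * Real.sqrt (Rd h t) ^ 3)
        (7 * (Real.sqrt (Rd h x) ^ 3) - 3 * (x^2 * Real.sqrt (Rd h x))
          - (12 * h) * Real.sqrt (Rd h x)) (Set.Ioi x) x :=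
    fun x hx => (pf_deriv h x hh hx).hasDerivWithinAt
  have hcont' : Continuous fun x : ℝ => 7 * (Real.sqrt (Rd h x) ^ 3)
      - 3 * (x^2 * Real.sqrt (Rd h x)) - (12 * h) * Real.sqrt (Rd h x) := by
    have := sqRd_cont h
    fun_prop
  have key := intervalIntegral.integral_eq_sub_of_hasDeriv_right_of_le hle hcont hder
    (hcont'.intervalIntegrable _ _)
  rw [Rd_at_a h hh, Rd_at_neg_a h hh] at key
  simp only [Real.sqrt_zero] at key
  have i1 : IntervalIntegrable (fun x => Real.sqrt (Rd h x) ^ 3) volume (-aext h) (aext h) :=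
    ((sqRd_cont h).pow 3).intervalIntegrable _ _
  have i2 : IntervalIntegrable (fun x : ℝ => x^2 * Real.sqrt (Rd h x)) volume (-aext h) (aext h) :=
    ((continuous_pow 2).mul (sqRd_cont h)).intervalIntegrable _ _
  have i3 : IntervalIntegrable (fun x => Real.sqrt (Rd h x)) volume (-aext h) (aext h) :=
    (sqRd_cont h).intervalIntegrable _ _
  rw [intervalIntegral.integral_sub ((i1.const_mul 7).sub (i2.const_mul 3))
      (i3.const_mul (12*h)),
    intervalIntegral.integral_sub (i1.const_mul 7) (i2.const_mul 3),
    intervalIntegral.integral_const_mul, intervalIntegral.integral_const_mul,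
    intervalIntegral.integral_const_mul] at key
  linarith [key]

theorem melnikov1_exterior
    (l0 l1 l2 l3 l4 l5 l6 l7 l8 l9 g0 g1 g2 g3 g4 g5 g6 g7 g8 g9 : ℝ)
    (h : ℝ) (hh : 0 < h) :
    (∫ p in {p : ℝ × ℝ | Hduff p.1 p.2 < h},
      ((l1 + l3 * p.2 + 2*l4*p.1 + 2*l6*p.1*p.2 + l7*p.2^2 + 3*l8*p.1^2)
        + (g2 + g3*p.1 + 2*g5*p.2 + g6*p.1^2 + 2*g7*p.1*p.2 + 3*g9*p.2^2)))
      = ((l1 + g2) + (4/7)*(l7 + 3*g9) * h) * Iext 0 h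
        + (g6 + 3*l8 + l7/7 + 3*g9/7) * Iext 2 h := by
  have ha := aext_pos h
  have hle : -aext h ≤ aext h := by linarith
  set f : ℝ → ℝ → ℝ := fun x y =>
    ((l1 + l3 * y + 2*l4*x + 2*l6*x*y + l7*y^2 + 3*l8*x^2)
      + (g2 + g3*x + 2*g5*y + g6*x^2 + 2*g7*x*y + 3*g9*y^2)) with hf_def
  have hf : Continuous fun p : ℝ × ℝ => f p.1 p.2 := by
    rw [hf_def]; fun_prop
  refine (fubini_S h hh f hf).trans ?_
  -- inner integral
  have hinner : ∀ x : ℝ,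
      (∫ y in Set.Ioo (-(Real.sqrt (Rd h x))) (Real.sqrt (Rd h x)), f x y)
        = 2*(Real.sqrt (Rd h x))*((l1 + g2) + (2*l4 + g3)*x + (3*l8 + g6)*x^2)
          + (2/3)*(Real.sqrt (Rd h x))^3*(l7 + 3*g9) := by
    intro x
    have heq : Set.EqOn (fun y => f x y)
        (fun y => ((l1 + g2) + (2*l4 + g3)*x + (3*l8 + g6)*x^2)
          + ((l3 + 2*g5) + (2*l6 + 2*g7)*x)*y + (l7 + 3*g9)*y^2)
        (Set.Ioo (-(Real.sqrt (Rd h x))) (Real.sqrt (Rd h x))) := by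
      intro y _
      simp only [hf_def]
      ring
    rw [MeasureTheory.setIntegral_congr_fun measurableSet_Ioo heq,
      inner_int _ _ _ _ (Real.sqrt_nonneg _)]
  simp only [hinner]
  -- restrict to the interval
  have hvanish : ∀ x : ℝ, x ∉ Set.Ioo (-aext h) (aext h) →
      2*(Real.sqrt (Rd h x))*((l1 + g2) + (2*l4 + g3)*x + (3*l8 + g6)*x^2)
        + (2/3)*(Real.sqrt (Rd h x))^3*(l7 + 3*g9) = 0 := by
    intro x hx
    have hx2 : aext h ^ 2 ≤ x ^ 2 := by
      simp only [Set.mem_Ioo, not_and_or, not_lt] at hx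
      rcases hx with hx | hx <;> nlinarith
    have : Real.sqrt (Rd h x) = 0 :=
      Real.sqrt_eq_zero_of_nonpos (Rd_nonpos h x hh hx2)
    rw [this]; ring
  rw [← MeasureTheory.setIntegral_eq_integral_of_forall_compl_eq_zero hvanish]
  rw [← MeasureTheory.integral_Ioc_eq_integral_Ioo,
    ← intervalIntegral.integral_of_le hle]
  -- split the interval integral
  have i0 : IntervalIntegrable (fun x => Real.sqrt (Rd h x)) volume (-aext h) (aext h) :=
    (sqRd_cont h).intervalIntegrable _ _
  have i1 : IntervalIntegrable (fun x : ℝ => x * Real.sqrt (Rd h x)) volume (-aext h) (aext h) :=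
    (continuous_id.mul (sqRd_cont h)).intervalIntegrable _ _
  have i2 : IntervalIntegrable (fun x : ℝ => x^2 * Real.sqrt (Rd h x)) volume (-aext h) (aext h) :=
    ((continuous_pow 2).mul (sqRd_cont h)).intervalIntegrable _ _
  have i3 : IntervalIntegrable (fun x => Real.sqrt (Rd h x) ^ 3) volume (-aext h) (aext h) :=
    ((sqRd_cont h).pow 3).intervalIntegrable _ _
  have hsplit : (∫ x in (-aext h)..(aext h),
      (2*(Real.sqrt (Rd h x))*((l1 + g2) + (2*l4 + g3)*x + (3*l8 + g6)*x^2)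
        + (2/3)*(Real.sqrt (Rd h x))^3*(l7 + 3*g9)))
      = (2*(l1 + g2)) * (∫ x in (-aext h)..(aext h), Real.sqrt (Rd h x))
        + (2*(2*l4 + g3)) * (∫ x in (-aext h)..(aext h), x * Real.sqrt (Rd h x))
        + (2*(3*l8 + g6)) * (∫ x in (-aext h)..(aext h), x^2 * Real.sqrt (Rd h x))
        + ((2/3)*(l7 + 3*g9)) * (∫ x in (-aext h)..(aext h), Real.sqrt (Rd h x) ^ 3) := by
    have heq : Set.EqOn
        (fun x => 2*(Real.sqrt (Rd h x))*((l1 + g2) + (2*l4 + g3)*x + (3*l8 + g6)*x^2)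
          + (2/3)*(Real.sqrt (Rd h x))^3*(l7 + 3*g9))
        (fun x => (2*(l1 + g2)) * Real.sqrt (Rd h x)
          + (2*(2*l4 + g3)) * (x * Real.sqrt (Rd h x))
          + (2*(3*l8 + g6)) * (x^2 * Real.sqrt (Rd h x))
          + ((2/3)*(l7 + 3*g9)) * (Real.sqrt (Rd h x) ^ 3))
        (Set.uIcc (-aext h) (aext h)) := by
      intro x _
      ring
    rw [intervalIntegral.integral_congr heq]
    rw [intervalIntegral.integral_add (((i0.const_mul _).add (i1.const_mul _)).add
        (i2.const_mul _)) (i3.const_mul _),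
      intervalIntegral.integral_add ((i0.const_mul _).add (i1.const_mul _)) (i2.const_mul _),
      intervalIntegral.integral_add (i0.const_mul _) (i1.const_mul _),
      intervalIntegral.integral_const_mul, intervalIntegral.integral_const_mul,
      intervalIntegral.integral_const_mul, intervalIntegral.integral_const_mul]
  rw [hsplit, odd_int h]
  have hPF := picard_fuchs h hh
  have hI0 : Iext 0 h = 2 * ∫ x in (-aext h)..(aext h), Real.sqrt (Rd h x) := by
    simp only [Iext, Rd, pow_zero, one_mul]
  have hI2 : Iext 2 h = 2 * ∫ x in (-aext h)..(aext h), x^2 * Real.sqrt (Rd h x) := by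
    simp only [Iext, Rd]
  rw [hI0, hI2]
  set J0 := ∫ x in (-aext h)..(aext h), Real.sqrt (Rd h x)
  set J2 := ∫ x in (-aext h)..(aext h), x^2 * Real.sqrt (Rd h x)
  set J3 := ∫ x in (-aext h)..(aext h), Real.sqrt (Rd h x) ^ 3
  linear_combination ((2/21)*(l7 + 3*g9)) * hPF
end
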